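/- arXiv:1109.5222 — 2 statements merged into one kernel-verified Lean document; each statement's English description precedes it below -/
import Mathlib

section
/- Let P₁, P₂, τ₁, τ₂ > 0 satisfy τ₁·(γ(P₁+P₂) − γ(P₁)) < τ₂·γ(P₁) and τ₂·(γ(P₁+P₂) − γ(P₂)) < τ₁·γ(P₂) (Case II), write a = γ(P₁), b = γ(P₂), s = γ(P₁+P₂), and let U = {(d₁, d₂) : a·d₁ ≥ τ₁, d₁ ≤ d₂, (s−b)·d₁ + b·d₂ ≥ τ₁ + τ₂} ∪ {(d₁, d₂) : b·d₂ ≥ τ₂, d₂ ≤ d₁, a·d₁ + (s−a)·d₂ ≥ τ₁ + τ₂}. Set w₃ = τ₁/(τ₁+τ₂), Ā = (τ₁/a + (a+b−s)·τ₂/(a·b), τ₂/b) and B̄ = (τ₁/a, τ₂/b + (a+b−s)·τ₁/(a·b)). Then Ā ∈ U and B̄ ∈ U, and for every w ∈ [0,1] and every (d₁, d₂) ∈ U: if w ∈ [0, w₃] then w·Ā₁ + (1−w)·Ā₂ ≤ w·d₁ + (1−w)·d₂, and if w ∈ [w₃, 1] then w·B̄₁ + (1−w)·B̄₂ ≤ w·d₁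 + (1−w)·d₂. -/
/-!
The region `U` is the union of two polyhedra, one on each side of the diagonal `d₁ = d₂`, so a
linear objective is minimised at one of their vertices: `Ā`, `B̄`, or the diagonal vertex
`C̄ = ((τ₁ + τ₂)/s, (τ₁ + τ₂)/s)`. Each comparison is certified by writing the gap as a nonnegative
combination of the constraints active at the vertex (an LP duality certificate); the Case II
inequalities make the multipliers nonnegative and `s ≤ a + b` (subadditivity of `γ`) orders
`Ā` against `B̄`. Exchanging the two users (swap the coordinates and replace `w` by `1 - w`)
maps `Ā` to `B̄`, so only the bounds for `Ā` need a proof.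
-/

/-- γ(x) = (1/2)·log₂(1+x). -/
noncomputable def gam (x : ℝ) : ℝ := (1/2) * Real.logb 2 (1 + x)

lemma gam_pos {x : ℝ} (hx : 0 < x) : 0 < gam x :=
  mul_pos one_half_pos (Real.logb_pos one_lt_two (by linarith))

lemma gam_add_le {x y : ℝ} (hx : 0 ≤ x) (hy : 0 ≤ y) : gam (x + y) ≤ gam x + gam y := by
  have hmul : Real.logb 2 (1 + (x + y)) ≤ Real.logb 2 ((1 + x) * (1 + y)) :=
    Real.logb_le_logb_of_le one_lt_two (by linarith) (by nlinarith)
  rw [Real.logb_mul (by linarith) (by linarith)] at hmul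
  simp only [gam]
  linarith

noncomputable section

def weightedTime (w : ℝ) (d : ℝ × ℝ) : ℝ := w * d.1 + (1 - w) * d.2

def completionRegion₁ (a b s τ₁ τ₂ : ℝ) : Set (ℝ × ℝ) :=
  {d | a * d.1 ≥ τ₁ ∧ d.1 ≤ d.2 ∧ (s - b) * d.1 + b * d.2 ≥ τ₁ + τ₂}

def completionRegion₂ (a b s τ₁ τ₂ : ℝ) : Set (ℝ × ℝ) :=
  {d | b * d.2 ≥ τ₂ ∧ d.2 ≤ d.1 ∧ a * d.1 + (s - a) * d.2 ≥ τ₁ + τ₂}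

def completionRegion (a b s τ₁ τ₂ : ℝ) : Set (ℝ × ℝ) :=
  completionRegion₁ a b s τ₁ τ₂ ∪ completionRegion₂ a b s τ₁ τ₂

def cornerA (a b s τ₁ τ₂ : ℝ) : ℝ × ℝ :=
  (τ₁ / a + (a + b - s) * τ₂ / (a * b), τ₂ / b)

def cornerB (a b s τ₁ τ₂ : ℝ) : ℝ × ℝ :=
  (τ₁ / a, τ₂ / b + (a + b - s) * τ₁ / (a * b))

def cornerDiagonal (s τ₁ τ₂ : ℝ) : ℝ × ℝ :=
  ((τ₁ + τ₂) / s, (τ₁ + τ₂) / s)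

end

section

variable {a b s τ₁ τ₂ w : ℝ} {d : ℝ × ℝ}

lemma weightedTime_one_sub_swap (w : ℝ) (d : ℝ × ℝ) :
    weightedTime (1 - w) d.swap = weightedTime w d := by
  simp only [weightedTime, Prod.fst_swap, Prod.snd_swap]
  ring

lemma cornerA_swap_users (a b s τ₁ τ₂ : ℝ) :
    cornerA b a s τ₂ τ₁ = (cornerB a b s τ₁ τ₂).swap := by
  simp only [cornerA, cornerB, Prod.swap_prod_mk, add_comm b a, mul_comm b a]

lemma swap_mem_completionRegion₁_iff :
    d.swap ∈ completionRegion₁ b a s τ₂ τ₁ ↔ d ∈ completionRegion₂ a b s τ₁ τ₂ := by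
  simp only [completionRegion₁, completionRegion₂, Set.mem_ofPred_eq, Prod.fst_swap,
    Prod.snd_swap, add_comm τ₂ τ₁, add_comm ((s - a) * d.2)]

lemma swap_mem_completionRegion₂_iff :
    d.swap ∈ completionRegion₂ b a s τ₂ τ₁ ↔ d ∈ completionRegion₁ a b s τ₁ τ₂ := by
  simpa using (swap_mem_completionRegion₁_iff (d := d.swap) (a := b) (b := a) (s := s)
    (τ₁ := τ₂) (τ₂ := τ₁)).symm

lemma swap_mem_completionRegion_iff :
    d.swap ∈ completionRegion b a s τ₂ τ₁ ↔ d ∈ completionRegion a b s τ₁ τ₂ := by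
  simp only [completionRegion, Set.mem_union, swap_mem_completionRegion₁_iff,
    swap_mem_completionRegion₂_iff, or_comm]

lemma cornerA_mem_completionRegion₂ (ha : 0 < a) (hb : 0 < b)
    (hB : τ₂ * (s - b) ≤ τ₁ * b) : cornerA a b s τ₁ τ₂ ∈ completionRegion₂ a b s τ₁ τ₂ := by
  have hgap : (cornerA a b s τ₁ τ₂).1 - (cornerA a b s τ₁ τ₂).2
      = (τ₁ * b - (s - b) * τ₂) / (a * b) := by
    simp only [cornerA]; field_simp; ring
  refine ⟨?_, ?_, ?_⟩
  · simp only [cornerA, mul_div_cancel₀ _ hb.ne', le_refl]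
  · have : 0 ≤ (τ₁ * b - (s - b) * τ₂) / (a * b) := div_nonneg (by linarith) (by positivity)
    linarith
  · exact ge_of_eq (by simp only [cornerA]; field_simp; ring)

lemma cornerB_mem_completionRegion₁ (ha : 0 < a) (hb : 0 < b)
    (hA : τ₁ * (s - a) ≤ τ₂ * a) : cornerB a b s τ₁ τ₂ ∈ completionRegion₁ a b s τ₁ τ₂ := by
  rw [← swap_mem_completionRegion₂_iff, ← cornerA_swap_users]
  exact cornerA_mem_completionRegion₂ hb ha hA

lemma weightedTime_cornerA_le_of_mem_completionRegion₂ (ha : 0 < a) (hb : 0 < b) (hw₀ : 0 ≤ w)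
    (hws : w * s ≤ a) (hd : d ∈ completionRegion₂ a b s τ₁ τ₂) :
    weightedTime w (cornerA a b s τ₁ τ₂) ≤ weightedTime w d := by
  obtain ⟨hd₂, -, hsum⟩ := hd
  have hgap : weightedTime w d - weightedTime w (cornerA a b s τ₁ τ₂)
      = (a - w * s) / (a * b) * (b * d.2 - τ₂)
        + w / a * (a * d.1 + (s - a) * d.2 - (τ₁ + τ₂)) := by
    simp only [weightedTime, cornerA]; field_simp; ring
  have : 0 ≤ (a - w * s) / (a * b) * (b * d.2 - τ₂)
      + w / a * (a * d.1 + (s - a) * d.2 - (τ₁ + τ₂)) :=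
    add_nonneg (mul_nonneg (div_nonneg (by linarith) (by positivity)) (by linarith))
      (mul_nonneg (div_nonneg hw₀ ha.le) (by linarith))
  linarith

lemma weightedTime_cornerB_le_of_mem_completionRegion₁ (ha : 0 < a) (hb : 0 < b) (hw₁ : w ≤ 1)
    (hws : s - b ≤ w * s) (hd : d ∈ completionRegion₁ a b s τ₁ τ₂) :
    weightedTime w (cornerB a b s τ₁ τ₂) ≤ weightedTime w d := by
  have := weightedTime_cornerA_le_of_mem_completionRegion₂ (w := 1 - w) hb ha (by linarith)
    (by linarith) (swap_mem_completionRegion₂_iff.2 hd)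
  rwa [cornerA_swap_users, weightedTime_one_sub_swap, weightedTime_one_sub_swap] at this

lemma weightedTime_cornerDiagonal_le_of_mem_completionRegion₁ (hs : 0 < s)
    (hws : w * s ≤ s - b) (hd : d ∈ completionRegion₁ a b s τ₁ τ₂) :
    weightedTime w (cornerDiagonal s τ₁ τ₂) ≤ weightedTime w d := by
  obtain ⟨-, hd₁₂, hsum⟩ := hd
  have hgap : weightedTime w d - weightedTime w (cornerDiagonal s τ₁ τ₂)
      = (s - w * s - b) / s * (d.2 - d.1) + ((s - b) * d.1 + b * d.2 - (τ₁ + τ₂)) / s := by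
    simp only [weightedTime, cornerDiagonal]; field_simp; ring
  have : 0 ≤ (s - w * s - b) / s * (d.2 - d.1) + ((s - b) * d.1 + b * d.2 - (τ₁ + τ₂)) / s :=
    add_nonneg (mul_nonneg (div_nonneg (by linarith) hs.le) (by linarith))
      (div_nonneg (by linarith) hs.le)
  linarith

lemma weightedTime_cornerA_le_cornerDiagonal (ha : 0 < a) (hb : 0 < b) (hs : 0 < s)
    (hws : w * s ≤ a) (hB : τ₂ * (s - b) ≤ τ₁ * b) :
    weightedTime w (cornerA a b s τ₁ τ₂) ≤ weightedTime w (cornerDiagonal s τ₁ τ₂) := by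
  have hgap : weightedTime w (cornerDiagonal s τ₁ τ₂) - weightedTime w (cornerA a b s τ₁ τ₂)
      = (a - w * s) / (s * (a * b)) * (τ₁ * b - τ₂ * (s - b)) := by
    simp only [weightedTime, cornerA, cornerDiagonal]; field_simp; ring
  have : 0 ≤ (a - w * s) / (s * (a * b)) * (τ₁ * b - τ₂ * (s - b)) :=
    mul_nonneg (div_nonneg (by linarith) (by positivity)) (by linarith)
  linarith

lemma weightedTime_cornerA_le_cornerB (ha : 0 < a) (hb : 0 < b) (hsab : s ≤ a + b)
    (hw : w * (τ₁ + τ₂) ≤ τ₁) :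
    weightedTime w (cornerA a b s τ₁ τ₂) ≤ weightedTime w (cornerB a b s τ₁ τ₂) := by
  have hgap : weightedTime w (cornerB a b s τ₁ τ₂) - weightedTime w (cornerA a b s τ₁ τ₂)
      = (τ₁ - w * (τ₁ + τ₂)) / (a * b) * (a + b - s) := by
    simp only [weightedTime, cornerA, cornerB]; field_simp; ring
  have : 0 ≤ (τ₁ - w * (τ₁ + τ₂)) / (a * b) * (a + b - s) :=
    mul_nonneg (div_nonneg (by linarith) (by positivity)) (by linarith)
  linarith

theorem weightedTime_cornerA_le (ha : 0 < a) (hb : 0 < b) (hs : 0 < s) (hsab : s ≤ a + b)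
    (hτ : 0 < τ₁ + τ₂) (hA : τ₁ * (s - a) ≤ τ₂ * a) (hB : τ₂ * (s - b) ≤ τ₁ * b)
    (hw₀ : 0 ≤ w) (hw₁ : w ≤ 1) (hw : w * (τ₁ + τ₂) ≤ τ₁)
    (hd : d ∈ completionRegion a b s τ₁ τ₂) :
    weightedTime w (cornerA a b s τ₁ τ₂) ≤ weightedTime w d := by
  have hws : w * s ≤ a := by
    refine le_of_mul_le_mul_right ?_ hτ
    linarith [mul_le_mul_of_nonneg_left hw hs.le]
  rcases hd with hd | hd
  · rcases le_total (w * s) (s - b) with hwb | hwb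
    · exact (weightedTime_cornerA_le_cornerDiagonal ha hb hs hws hB).trans
        (weightedTime_cornerDiagonal_le_of_mem_completionRegion₁ hs hwb hd)
    · exact (weightedTime_cornerA_le_cornerB ha hb hsab hw).trans
        (weightedTime_cornerB_le_of_mem_completionRegion₁ ha hb hw₁ hwb hd)
  · exact weightedTime_cornerA_le_of_mem_completionRegion₂ ha hb hw₀ hws hd

theorem weightedTime_cornerB_le (ha : 0 < a) (hb : 0 < b) (hs : 0 < s) (hsab : s ≤ a + b)
    (hτ : 0 < τ₁ + τ₂) (hA : τ₁ * (s - a) ≤ τ₂ * a) (hB : τ₂ * (s - b) ≤ τ₁ * b)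
    (hw₀ : 0 ≤ w) (hw₁ : w ≤ 1) (hw : τ₁ ≤ w * (τ₁ + τ₂))
    (hd : d ∈ completionRegion a b s τ₁ τ₂) :
    weightedTime w (cornerB a b s τ₁ τ₂) ≤ weightedTime w d := by
  have := weightedTime_cornerA_le (w := 1 - w) hb ha hs (by linarith) (by linarith) hB hA
    (by linarith) (by linarith) (by linarith) (swap_mem_completionRegion_iff.2 hd)
  rwa [cornerA_swap_users, weightedTime_one_sub_swap, weightedTime_one_sub_swap] at this

end

theorem stmt_15 (P₁ P₂ τ₁ τ₂ a b s : ℝ) (hP₁ : 0 < P₁) (hP₂ : 0 < P₂)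
    (hτ₁ : 0 < τ₁) (hτ₂ : 0 < τ₂)
    (ha : a = gam P₁) (hb : b = gam P₂) (hs : s = gam (P₁ + P₂))
    (hcaseA : τ₁ * (s - a) < τ₂ * a) (hcaseB : τ₂ * (s - b) < τ₁ * b)
    (U : Set (ℝ × ℝ))
    (hU : U = {d : ℝ × ℝ | a * d.1 ≥ τ₁ ∧ d.1 ≤ d.2 ∧
          (s - b) * d.1 + b * d.2 ≥ τ₁ + τ₂} ∪
        {d : ℝ × ℝ | b * d.2 ≥ τ₂ ∧ d.2 ≤ d.1 ∧
          a * d.1 + (s - a) * d.2 ≥ τ₁ + τ₂}) :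
    (τ₁ / a + (a + b - s) * τ₂ / (a * b), τ₂ / b) ∈ U ∧
    (τ₁ / a, τ₂ / b + (a + b - s) * τ₁ / (a * b)) ∈ U ∧
    ∀ w : ℝ, w ∈ Set.Icc (0:ℝ) 1 → ∀ d : ℝ × ℝ, d ∈ U →
      (w ∈ Set.Icc (0:ℝ) (τ₁ / (τ₁ + τ₂)) →
        w * (τ₁ / a + (a + b - s) * τ₂ / (a * b)) + (1 - w) * (τ₂ / b) ≤
          w * d.1 + (1 - w) * d.2) ∧
      (w ∈ Set.Icc (τ₁ / (τ₁ + τ₂)) 1 →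
        w * (τ₁ / a) + (1 - w) * (τ₂ / b + (a + b - s) * τ₁ / (a * b)) ≤
          w * d.1 + (1 - w) * d.2) := by
  have ha₀ : 0 < a := ha ▸ gam_pos hP₁
  have hb₀ : 0 < b := hb ▸ gam_pos hP₂
  have hs₀ : 0 < s := hs ▸ gam_pos (add_pos hP₁ hP₂)
  have hsab : s ≤ a + b := ha ▸ hb ▸ hs ▸ gam_add_le hP₁.le hP₂.le
  have hτ : 0 < τ₁ + τ₂ := add_pos hτ₁ hτ₂
  change U = completionRegion a b s τ₁ τ₂ at hU
  subst hU
  refine ⟨Or.inr (cornerA_mem_completionRegion₂ ha₀ hb₀ hcaseB.le),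
    Or.inl (cornerB_mem_completionRegion₁ ha₀ hb₀ hcaseA.le),
    fun w ⟨hw₀, hw₁⟩ d hd => ⟨fun hw => ?_, fun hw => ?_⟩⟩
  · exact weightedTime_cornerA_le ha₀ hb₀ hs₀ hsab hτ hcaseA.le hcaseB.le hw₀ hw₁
      ((le_div_iff₀ hτ).1 hw.2) hd
  · exact weightedTime_cornerB_le ha₀ hb₀ hs₀ hsab hτ hcaseA.le hcaseB.le hw₀ hw₁
      ((div_le_iff₀ hτ).1 hw.1) hd
end

section
/- Let P₁, P₂, τ₁, τ₂ > 0 satisfy τ₁·(γ(P₁+P₂) − γ(P₁)) < τ₂·γ(P₁) and τ₂·(γ(P₁+P₂) − γ(P₂)) < τ₁·γ(P₂) (Case II), write a = γ(P₁), b = γ(P₂), s = γ(P₁+P₂), and let U = {(d₁, d₂) : a·d₁ ≥ τ₁, d₁ ≤ d₂, (s−b)·d₁ + b·d₂ ≥ τ₁ + τ₂} ∪ {(d₁, d₂) : b·d₂ ≥ τ₂, d₂ ≤ d₁, a·d₁ + (s−a)·d₂ ≥ τ₁ + τ₂}. Then the point ((τ₁+τ₂)/s, (τ₁+τ₂)/s)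 belongs to U, and for every (d₁, d₂) ∈ U one has max{d₁, d₂} ≥ (τ₁+τ₂)/s; in other words, the minimum over U of max{d₁, d₂} equals (τ₁+τ₂)/γ(P₁+P₂). -/
lemma gam_lt {x y : ℝ} (hx : -1 < x) (hxy : x < y) : gam x < gam y := by
  unfold gam
  have : Real.logb 2 (1 + x) < Real.logb 2 (1 + y) :=
    Real.logb_lt_logb (by norm_num) (by linarith) (by linarith)
  linarith

theorem stmt_18 (P₁ P₂ τ₁ τ₂ a b s : ℝ) (hP₁ : 0 < P₁) (hP₂ : 0 < P₂)
    (hτ₁ : 0 < τ₁) (hτ₂ : 0 < τ₂)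
    (ha : a = gam P₁) (hb : b = gam P₂) (hs : s = gam (P₁ + P₂))
    (hcaseA : τ₁ * (s - a) < τ₂ * a) (hcaseB : τ₂ * (s - b) < τ₁ * b)
    (U : Set (ℝ × ℝ))
    (hU : U = {d : ℝ × ℝ | a * d.1 ≥ τ₁ ∧ d.1 ≤ d.2 ∧
          (s - b) * d.1 + b * d.2 ≥ τ₁ + τ₂} ∪
        {d : ℝ × ℝ | b * d.2 ≥ τ₂ ∧ d.2 ≤ d.1 ∧
          a * d.1 + (s - a) * d.2 ≥ τ₁ + τ₂}) :
    ((τ₁ + τ₂) / s, (τ₁ + τ₂) / s) ∈ U ∧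
    ∀ d : ℝ × ℝ, d ∈ U → (τ₁ + τ₂) / s ≤ max d.1 d.2 := by
  have hgam0 : gam 0 = 0 := by simp [gam]
  have ha0 : 0 < a := by rw [ha, ← hgam0]; exact gam_lt (by norm_num) hP₁
  have hb0 : 0 < b := by rw [hb, ← hgam0]; exact gam_lt (by norm_num) hP₂
  have has : a < s := by rw [ha, hs]; exact gam_lt (by linarith) (by linarith)
  have hbs : b < s := by rw [hb, hs]; exact gam_lt (by linarith) (by linarith)
  have hs0 : 0 < s := lt_trans ha0 has
  subst hU
  constructor
  · left
    refine ⟨?_, le_refl _, ?_⟩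
    · show τ₁ ≤ a * ((τ₁ + τ₂) / s)
      rw [← mul_div_assoc, le_div_iff₀ hs0]
      nlinarith
    · show (s - b) * ((τ₁ + τ₂) / s) + b * ((τ₁ + τ₂) / s) ≥ τ₁ + τ₂
      have : (s - b) * ((τ₁ + τ₂) / s) + b * ((τ₁ + τ₂) / s) = s * ((τ₁ + τ₂) / s) := by
        ring
      rw [this, mul_div_cancel₀ _ (ne_of_gt hs0)]
  · rintro ⟨d₁, d₂⟩ (⟨h1, h2, h3⟩ | ⟨h1, h2, h3⟩) <;> simp only at *
    · have hm : d₂ = max d₁ d₂ := (max_eq_right h2).symm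
      rw [div_le_iff₀ hs0]
      have hd1 : d₁ ≤ max d₁ d₂ := le_max_left _ _
      nlinarith [le_max_right d₁ d₂]
    · rw [div_le_iff₀ hs0]
      nlinarith [le_max_left d₁ d₂, le_max_right d₁ d₂]
end
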